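/- Closed form of the Szegő sum for gapped BDI symbols: Let z_1,…,z_{N_z} be complex with 0 < |z_i| < 1 and Z_1,…,Z_{N_Z} complex with |Z_j| > 1, each list invariant as a multiset under complex conjugation. For n ≥ 1 set A_n = Σ_{i=1}^{N_z} z_i^n − Σ_{j=1}^{N_Z} Z_j^{-n}, which is a real number. Then the series Σ_{n=1}^∞ A_n²/(4n) converges and exp( − Σ_{n=1}^∞ A_n²/(4n) ) = A, where A is the order-parameter constant. -/

import Mathlib

/-!
Write `p n = ∑ᵢ uᵢⁿ - ∑ⱼ vⱼⁿ` with `u = z` and `v = Z⁻¹`, all of modulus `< 1`. Expanding `p n ^ 2`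
gives power sums of the pairwise products `uᵢuᵢ'`, `vⱼvⱼ'` and `uᵢvⱼ`, and `∑ₙ wⁿ/n = -log (1 - w)`
turns `∑ₙ p n ^ 2 / n` into a combination of logarithms whose exponential is the product in the
statement. Conjugation invariance of the two lists makes every `p n`, hence the whole sum, real.
-/

open Complex ComplexConjugate

section PowerSums

variable {ι κ : Type*} [Fintype ι] [Fintype κ]

theorem hasSum_pow_succ_div_neg_log {w : ℂ} (hw : ‖w‖ < 1) :
    HasSum (fun n : ℕ => w ^ (n + 1) / ((n : ℂ) + 1)) (-log (1 - w)) := by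
  have h := hasSum_taylorSeries_neg_log (z := w) (by simpa using hw)
  rw [← hasSum_nat_add_iff' 1] at h
  simpa using h

theorem hasSum_sum_pow_succ_div {w : ι → ℂ} (hw : ∀ i, ‖w i‖ < 1) :
    HasSum (fun n : ℕ => (∑ i, w i ^ (n + 1)) / ((n : ℂ) + 1)) (-∑ i, log (1 - w i)) := by
  simp only [Finset.sum_div, ← Finset.sum_neg_distrib]
  exact hasSum_sum fun i _ => hasSum_pow_succ_div_neg_log (hw i)

theorem exp_sum_log_one_sub {w : ι → ℂ} (hw : ∀ i, ‖w i‖ < 1) :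
    exp (∑ i, log (1 - w i)) = ∏ i, (1 - w i) := by
  rw [exp_sum]
  refine Finset.prod_congr rfl fun i _ => exp_log (sub_ne_zero.mpr fun h => ?_)
  simpa [← h] using hw i

theorem norm_mul_lt_one {a b : ℂ} (ha : ‖a‖ < 1) (hb : ‖b‖ < 1) : ‖a * b‖ < 1 := by
  rw [norm_mul]
  nlinarith [norm_nonneg a, norm_nonneg b]

theorem sq_sum_pow_sub_sum_pow {R : Type*} [CommRing R] (u : ι → R) (v : κ → R) (n : ℕ) :
    (∑ i, u i ^ n - ∑ j, v j ^ n) ^ 2 =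
      ∑ p : ι × ι, (u p.1 * u p.2) ^ n + ∑ q : κ × κ, (v q.1 * v q.2) ^ n
        - 2 * ∑ r : ι × κ, (u r.1 * v r.2) ^ n := by
  simp only [mul_pow, Fintype.sum_prod_type, ← Finset.sum_mul_sum]
  ring

/-- For `u = z`, `v = Z⁻¹` this is a logarithm of `A⁴`, the fourth power of the order parameter. -/
noncomputable def logOrderParam (u : ι → ℂ) (v : κ → ℂ) : ℂ :=
  ∑ p : ι × ι, log (1 - u p.1 * u p.2) + ∑ q : κ × κ, log (1 - v q.1 * v q.2)
    - 2 * ∑ r : ι × κ, log (1 - u r.1 * v r.2)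

variable {u : ι → ℂ} {v : κ → ℂ}

theorem hasSum_sq_sum_pow_sub_sum_pow_div (hu : ∀ i, ‖u i‖ < 1) (hv : ∀ j, ‖v j‖ < 1) :
    HasSum (fun n : ℕ => (∑ i, u i ^ (n + 1) - ∑ j, v j ^ (n + 1)) ^ 2 / ((n : ℂ) + 1))
      (-logOrderParam u v) := by
  have huu := hasSum_sum_pow_succ_div (w := fun p : ι × ι => u p.1 * u p.2)
    fun p => norm_mul_lt_one (hu p.1) (hu p.2)
  have hvv := hasSum_sum_pow_succ_div (w := fun q : κ × κ => v q.1 * v q.2)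
    fun q => norm_mul_lt_one (hv q.1) (hv q.2)
  have huv := hasSum_sum_pow_succ_div (w := fun r : ι × κ => u r.1 * v r.2)
    fun r => norm_mul_lt_one (hu r.1) (hv r.2)
  have hsum := (huu.add hvv).sub (huv.mul_left 2)
  rw [show -logOrderParam u v = -∑ p : ι × ι, log (1 - u p.1 * u p.2)
      + -∑ q : κ × κ, log (1 - v q.1 * v q.2) - 2 * -∑ r : ι × κ, log (1 - u r.1 * v r.2) by
    unfold logOrderParam; ring]
  refine hsum.congr_fun fun n => ?_
  rw [sq_sum_pow_sub_sum_pow]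
  ring

theorem exp_logOrderParam (hu : ∀ i, ‖u i‖ < 1) (hv : ∀ j, ‖v j‖ < 1) :
    exp (logOrderParam u v) =
      (∏ p : ι × ι, (1 - u p.1 * u p.2)) * (∏ q : κ × κ, (1 - v q.1 * v q.2))
        / (∏ r : ι × κ, (1 - u r.1 * v r.2)) ^ 2 := by
  rw [logOrderParam, exp_sub, exp_add, two_mul, exp_add,
    exp_sum_log_one_sub (w := fun p : ι × ι => u p.1 * u p.2)
      fun p => norm_mul_lt_one (hu p.1) (hu p.2),
    exp_sum_log_one_sub (w := fun q : κ × κ => v q.1 * v q.2)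
      fun q => norm_mul_lt_one (hv q.1) (hv q.2),
    exp_sum_log_one_sub (w := fun r : ι × κ => u r.1 * v r.2)
      fun r => norm_mul_lt_one (hu r.1) (hv r.2), sq]

end PowerSums

theorem conj_sum_comp_ofFn {n : ℕ} {z : Fin n → ℂ}
    (hz : Multiset.map (starRingEnd ℂ) (↑(List.ofFn z) : Multiset ℂ) = ↑(List.ofFn z))
    {f : ℂ → ℂ} (hf : ∀ w, f (conj w) = conj (f w)) :
    conj (∑ i, f (z i)) = ∑ i, f (z i) := by
  have hsum : ∑ i, f (z i) = (Multiset.map f (↑(List.ofFn z) : Multiset ℂ)).sum := by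
    simp [List.sum_ofFn]
  rw [hsum, map_multiset_sum, Multiset.map_map]
  conv_rhs => rw [← hz, Multiset.map_map]
  exact congrArg Multiset.sum (Multiset.map_congr rfl fun w _ => (hf w).symm)

theorem conj_eq_of_hasSum {α : Type*} {f : α → ℂ} {a : ℂ} (h : HasSum f a)
    (hf : ∀ n, conj (f n) = f n) : conj a = a :=
  ((hasSum_conj'.mpr h).congr_fun fun n => (hf n).symm).unique h

theorem szego_sum_closed_form
    (Nz NZ : ℕ)
    (z : Fin Nz → ℂ) (Z : Fin NZ → ℂ)
    (hz : ∀ i, 0 < ‖z i‖ ∧ ‖z i‖ < 1)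
    (hZ : ∀ j, 1 < ‖Z j‖)
    (hzconj : Multiset.map (starRingEnd ℂ) (↑(List.ofFn z) : Multiset ℂ)
      = (↑(List.ofFn z) : Multiset ℂ))
    (hZconj : Multiset.map (starRingEnd ℂ) (↑(List.ofFn Z) : Multiset ℂ)
      = (↑(List.ofFn Z) : Multiset ℂ))
    (A : ℕ → ℂ)
    (hA : ∀ n : ℕ, A n = (∑ i, z i ^ n) - ∑ j, Z j ^ (-(n : ℤ))) :
    (∀ n : ℕ, 1 ≤ n → (A n).im = 0) ∧
    Summable (fun n : ℕ => A (n + 1) ^ 2 / (4 * ((n : ℂ) + 1))) ∧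
    ∃ Aord : ℝ, 0 < Aord ∧
      (Aord : ℂ) ^ 4 =
        (∏ i, ∏ i', (1 - z i * z i')) * (∏ j, ∏ j', (1 - 1 / (Z j * Z j'))) /
          ∏ i, ∏ j, (1 - z i / Z j) ^ 2 ∧
      Complex.exp (-∑' n : ℕ, A (n + 1) ^ 2 / (4 * ((n : ℂ) + 1))) = (Aord : ℂ) := by
  have hconjA (n : ℕ) : conj (A n) = A n := by
    rw [hA, map_sub,
      conj_sum_comp_ofFn (f := fun w => w ^ n) hzconj fun w => (map_pow _ w n).symm,
      conj_sum_comp_ofFn (f := fun w => w ^ (-(n : ℤ))) hZconj fun w => (map_zpow₀ _ w _).symm]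
  have hZinv (j : Fin NZ) : ‖(Z j)⁻¹‖ < 1 := by
    rw [norm_inv]
    exact inv_lt_one_of_one_lt₀ (hZ j)
  have hsum : HasSum (fun n : ℕ => A (n + 1) ^ 2 / (4 * ((n : ℂ) + 1)))
      (-logOrderParam z (fun j => (Z j)⁻¹) / 4) := by
    refine ((hasSum_sq_sum_pow_sub_sum_pow_div (fun i => (hz i).2) hZinv).div_const 4).congr_fun
      fun n => ?_
    rw [hA, div_div, mul_comm (4 : ℂ)]
    simp only [zpow_neg, zpow_natCast, inv_pow]
  set t := ∑' n : ℕ, A (n + 1) ^ 2 / (4 * ((n : ℂ) + 1))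
  have ht : t = -logOrderParam z (fun j => (Z j)⁻¹) / 4 := hsum.tsum_eq
  have ht_real : (t.re : ℂ) = t := conj_eq_iff_re.mp <| conj_eq_of_hasSum hsum.summable.hasSum
    fun n => by
      simp only [map_div₀, map_pow, hconjA, map_mul, map_add, map_natCast, map_one, map_ofNat]
  refine ⟨fun n _ => conj_eq_iff_im.mp (hconjA n), hsum.summable, Real.exp (-t.re),
    Real.exp_pos _, ?_, by rw [ofReal_exp, ofReal_neg, ht_real]⟩
  rw [ofReal_exp, ← exp_nat_mul, ofReal_neg, ht_real, ht,
    show ((4 : ℕ) : ℂ) * -(-logOrderParam z (fun j => (Z j)⁻¹) / 4)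
      = logOrderParam z (fun j => (Z j)⁻¹) by push_cast; ring,
    exp_logOrderParam (fun i => (hz i).2) hZinv]
  simp only [Fintype.prod_prod_type, Finset.prod_pow, mul_inv, div_eq_mul_inv, one_mul]
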